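/- Let k₁₂ ≥ 1 be real and let s₁, s₂, p₁, p₂ be real. Then the complex-valued function t ↦ (1-t)^{-k₁₂ + i p₁ + i p₂} · t^{-i p₂ + i s₂ - 1/2} · ₂F₁(1-k₁₂+i s₁+i s₂, 1-k₁₂-i s₁+i s₂; 1+2i s₂; t) is integrable with respect to Lebesgue measure on (0,1/2), and the function t ↦ (1-t)^{k₁₂ - 1 + i p₁ + i p₂} · t^{-i p₂ + i s₂ - 1/2} · ₂F₁(k₁₂-i s₁+i s₂, k₁₂+i s₁+i s₂; 2k₁₂; 1-t) is integrable with respect to Lebesgue measure on (1/2,1). (Convergence of the two pieces of the integral I₂(C,C,+).) -/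

import Mathlib

open Complex Filter Set MeasureTheory

/-- The `n`-th term of the Gauss hypergeometric series `₂F₁(a,b;c;z)`. -/
noncomputable def hypTerm (a b c z : ℂ) (n : ℕ) : ℂ :=
  (ascPochhammer ℂ n).eval a * (ascPochhammer ℂ n).eval b /
    ((ascPochhammer ℂ n).eval c * (n.factorial : ℂ)) * z ^ n

/-- The Gauss hypergeometric function `₂F₁(a,b;c;z)`. -/
noncomputable def hyp (a b c z : ℂ) : ℂ := ∑' n, hypTerm a b c z n

/-!
Away from nonpositive integers `c`, `₂F₁(a,b;c;·)` is `Γ(c)` times Mathlib's regularized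
hypergeometric function, whose series has radius of convergence at least `1`; so `₂F₁` is
continuous on the open unit disc. On each half of `(0,1)` the integrand is therefore a power
`x ^ u` with `-1 < re u` (`x = t` near `0`, `x = 1 - t` near `1`) times a function continuous on the
closed half-interval, and the piece on `(1/2,1)` takes the shape of the one on `(0,1/2)` under
`t ↦ 1 - t`.
-/

theorem ne_neg_natCast_of_re_pos {c : ℂ} (hc : 0 < c.re) (k : ℕ) : c ≠ -k := by
  rintro rfl
  simp only [neg_re, natCast_re, Left.neg_pos_iff] at hc
  exact (Nat.cast_nonneg k).not_gt hc

theorem hyp_eq_ordinaryHypergeometric (a b c z : ℂ) : hyp a b c z = ₂F₁ a b c z := by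
  rw [ordinaryHypergeometric, ordinaryHypergeometric_sum_eq]
  refine tsum_congr fun n => ?_
  rw [hypTerm, smul_eq_mul]
  field_simp

theorem hyp_eq_Gamma_mul_regularizedGaussHGFun {a b c : ℂ} (hc : ∀ k : ℕ, c ≠ -k) (z : ℂ) :
    hyp a b c z = Gamma c * regularizedGaussHGFun a b c z := by
  rw [hyp_eq_ordinaryHypergeometric, ← ordinaryHypergeometric_div_Gamma_eq hc,
    mul_div_cancel₀ _ (Gamma_ne_zero hc)]

theorem continuousOn_hyp {a b c : ℂ} (hc : ∀ k : ℕ, c ≠ -k) :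
    ContinuousOn (hyp a b c) (Metric.ball 0 1) := by
  have hball :
      Metric.ball (0 : ℂ) 1 ⊆ Metric.eball 0 (regularizedGaussHGFunSeries a b c).radius := by
    rw [← Metric.eball_ofReal, ENNReal.ofReal_one]
    exact Metric.eball_subset_eball (radius_regularizedGaussHGFunSeries_ge_one a b c)
  rw [funext (hyp_eq_Gamma_mul_regularizedGaussHGFun hc)]
  exact continuousOn_const.mul (FormalMultilinearSeries.continuousOn.mono hball)

theorem intervalIntegrable_cpow_mul_one_sub_cpow_mul_hyp {u : ℂ} (hu : -1 < u.re) (v : ℂ)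
    {a b c : ℂ} (hc : ∀ k : ℕ, c ≠ -k) {r : ℝ} (hr₀ : 0 ≤ r) (hr₁ : r < 1) :
    IntervalIntegrable (fun t : ℝ => (t : ℂ) ^ u * (((1 - t : ℝ) : ℂ) ^ v * hyp a b c t))
      volume 0 r := by
  refine (intervalIntegral.intervalIntegrable_cpow' hu).mul_continuousOn ?_
  rw [uIcc_of_le hr₀]
  refine ContinuousOn.mul ?_ ((continuousOn_hyp hc).comp continuous_ofReal.continuousOn ?_)
  · refine (continuous_ofReal.comp (continuous_sub_left 1)).continuousOn.cpow_const fun t ht => ?_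
    exact ofReal_mem_slitPlane.mpr (by linarith [ht.2])
  · intro t ht
    simpa [abs_of_nonneg ht.1] using ht.2.trans_lt hr₁

/-- Convergence of the two pieces of the integral `I₂(C,C,+)`. -/
theorem integral_CCP_I2_integrable (k₁₂ s₁ s₂ p₁ p₂ : ℝ) (h12 : 1 ≤ k₁₂) :
    IntegrableOn (fun t : ℝ =>
        ((1 - t : ℝ) : ℂ) ^ (-(k₁₂ : ℂ) + I * (p₁ : ℂ) + I * (p₂ : ℂ)) *
          ((t : ℝ) : ℂ) ^ (-(I * (p₂ : ℂ)) + I * (s₂ : ℂ) - 1 / 2) *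
          hyp (1 - k₁₂ + I * (s₁ : ℂ) + I * (s₂ : ℂ))
            (1 - k₁₂ - I * (s₁ : ℂ) + I * (s₂ : ℂ)) (1 + 2 * I * (s₂ : ℂ)) t)
      (Ioo 0 (1 / 2)) volume ∧
    IntegrableOn (fun t : ℝ =>
        ((1 - t : ℝ) : ℂ) ^ ((k₁₂ : ℂ) - 1 + I * (p₁ : ℂ) + I * (p₂ : ℂ)) *
          ((t : ℝ) : ℂ) ^ (-(I * (p₂ : ℂ)) + I * (s₂ : ℂ) - 1 / 2) *
          hyp ((k₁₂ : ℂ) - I * (s₁ : ℂ) + I * (s₂ : ℂ))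
            ((k₁₂ : ℂ) + I * (s₁ : ℂ) + I * (s₂ : ℂ)) (2 * (k₁₂ : ℂ))
            ((1 - t : ℝ) : ℂ))
      (Ioo (1 / 2) 1) volume := by
  constructor
  · have h := intervalIntegrable_cpow_mul_one_sub_cpow_mul_hyp
      (u := -(I * p₂) + I * s₂ - 1 / 2) (by norm_num) (-(k₁₂ : ℂ) + I * p₁ + I * p₂)
      (a := 1 - k₁₂ + I * s₁ + I * s₂) (b := 1 - k₁₂ - I * s₁ + I * s₂)
      (ne_neg_natCast_of_re_pos (c := 1 + 2 * I * s₂) (by norm_num))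
      (r := 1 / 2) (by norm_num) (by norm_num)
    rw [intervalIntegrable_iff_integrableOn_Ioo_of_le (by norm_num)] at h
    exact h.congr_fun (fun t _ => by ring) measurableSet_Ioo
  · have h := intervalIntegrable_cpow_mul_one_sub_cpow_mul_hyp
      (u := k₁₂ - 1 + I * p₁ + I * p₂) (by norm_num; linarith) (-(I * p₂) + I * s₂ - 1 / 2)
      (a := k₁₂ - I * s₁ + I * s₂) (b := k₁₂ + I * s₁ + I * s₂)
      (ne_neg_natCast_of_re_pos (c := 2 * k₁₂) (by norm_num; linarith))
      (r := 1 / 2) (by norm_num) (by norm_num)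
    have h' := (h.comp_sub_left 1).symm
    rw [sub_zero, show (1 : ℝ) - 1 / 2 = 1 / 2 by norm_num,
      intervalIntegrable_iff_integrableOn_Ioo_of_le (by norm_num)] at h'
    exact h'.congr_fun (fun t _ => by simp only [sub_sub_cancel]; ring) measurableSet_Ioo
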